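/- arXiv:math/0612139 — 5 statements merged into one kernel-verified Lean document; each statement's English description precedes it below -/
import Mathlib

section
/- Let F = ℂ⟨x₁,…,xₙ⟩ and Φ ∈ F_cyc a potential. For every r ≥ 1 and every r-tuple of indices (i₁,…,i_r), the higher cyclic derivative satisfies the cyclic symmetry σ(∂ʳΦ/∂x_{i₁}…∂x_{i_r}) = ∂ʳΦ/∂x_{σ(i₁)}…∂x_{σ(i_r)}, where on the left σ denotes cyclic permutation of the tensor factors of F^{⊗r} and on the right σ is the corresponding cyclic permutation of the indices. -/
/-!
STATEMENT 2. For `F = ℂ⟨x₁,…,xₙ⟩` and a potential `Φ ∈ F_cyc`, the higher cyclic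
derivatives `∂ʳΦ/∂x_{i₁}…∂x_{i_r} ∈ F^{⊗r}` satisfy the cyclic symmetry
`σ(∂ʳΦ/∂x_{i₁}…∂x_{i_r}) = ∂ʳΦ/∂x_{σ(i₁)}…∂x_{σ(i_r)}`, where `σ` is the cyclic
permutation of the tensor factors of `F^{⊗r}` (resp. the cyclic permutation of the
indices).

We model `⊕_r F^{⊗r}` concretely as formal `ℂ`-linear combinations of tuples of words
(`Tens α` below); a tuple `[t₁,…,t_r]` of words represents the tensor `t₁ ⊗ … ⊗ t_r`.
The higher derivative is defined recursively, as in the paper: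
`∂ʳΦ/∂x_{i₁}∂x_{i₂}…∂x_{i_r} = ∂/∂x_{i₁} (∂^{r-1}Φ/∂x_{i₂}…∂x_{i_r})`, where for `r = 1`
one takes the cyclic derivative and for `r > 1` one applies the double-derivation
`∂/∂x_j : F^{⊗r} → F^{⊗(r+1)}` splitting the first tensor factor at each occurrence of `x_j`.
-/

open scoped BigOperators

noncomputable section

/-- The free associative `ℂ`-algebra on generators indexed by `α`. -/
abbrev FA (α : Type) : Type := MonoidAlgebra ℂ (FreeMonoid α)

/-- Formal `ℂ`-linear combinations of tuples of words: a concrete model for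
`⊕_{r≥0} F^{⊗r}` (a tuple of length `r` spans a line in `F^{⊗r}`). -/
abbrev Tens (α : Type) : Type := (List (List α)) →₀ ℂ

/-- All ways of writing `w = a ++ [j] ++ b`. -/
def splits {α : Type} [DecidableEq α] (j : α) (w : List α) :
    List (List α × List α) :=
  (List.range w.length).filterMap fun s =>
    if w[s]? = some j then some (w.take s, w.drop (s + 1)) else none

/-- All cyclic splittings of a cyclic word `w` at an occurrence of `j`: the results are the
linear words read starting right after the deleted occurrence of `j`. -/
def cycSplits {α : Type} [DecidableEq α] (j : α) (w : List α) : List (List α) :=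
  (splits j w).map fun p => p.2 ++ p.1

/-- Split the first tensor factor of a tuple at each occurrence of `j`
(the double derivation `∂/∂x_j : F^{⊗r} → F^{⊗(r+1)}` on a basis tuple). -/
def splitFirstTup {α : Type} [DecidableEq α] (j : α) : List (List α) → Tens α
  | [] => 0
  | t :: ts => ((splits j t).map fun p => Finsupp.single (p.1 :: p.2 :: ts) (1 : ℂ)).sum

/-- Linear extension of `splitFirstTup`. -/
def splitFirst {α : Type} [DecidableEq α] (j : α) (x : Tens α) : Tens α :=
  Finsupp.sum x fun tup c => c • splitFirstTup j tup

/-- `hdWord i rest w = ∂^{1 + rest.length} w / ∂x_i ∂x_{rest}` for a cyclic word `w`. -/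
def hdWord {α : Type} [DecidableEq α] : α → List α → List α → Tens α
  | i, [], w => ((cycSplits i w).map fun v => Finsupp.single [v] (1 : ℂ)).sum
  | i, k :: rest, w => splitFirst i (hdWord k rest w)

/-- Higher cyclic derivative of a cyclic word with respect to a nonempty list of indices. -/
def hdTuple {α : Type} [DecidableEq α] : List α → List α → Tens α
  | [], _ => 0
  | i :: rest, w => hdWord i rest w

/-- The higher cyclic derivative `∂ʳΦ/∂x_{i₁}…∂x_{i_r} ∈ F^{⊗r}` of `Φ ∈ F`
(well defined on the commutator quotient `F_cyc`). -/
def higherDer {α : Type} [DecidableEq α] (idx : List α) (Φ : FA α) : Tens α :=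
  Finsupp.sum Φ.coeff fun w c => c • hdTuple idx (FreeMonoid.toList w)

/-- The cyclic permutation `σ` of the tensor factors of `F^{⊗r}`. -/
def rotT {α : Type} : Tens α →ₗ[ℂ] Tens α :=
  Finsupp.lmapDomain ℂ ℂ fun l : List (List α) => l.rotate 1

/-!
Unwinding the recursion, `hdTuple [i₁,…,i_r] w` is the sum of the tuples `[t₁,…,t_r]` over all
ways of reading the cyclic word `w` as `x_{i_r} t₁ x_{i₁} t₂ ⋯ x_{i_{r-1}} t_r`. Rotating the
tuple to `[t₂,…,t_r,t₁]` amounts to reading the same cyclic word from `x_{i₁}` on instead of from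
`x_{i_r}`, which is the description of the derivative along the rotated indices. Formally only
the two outermost cuts have to be exchanged: cutting the cyclic word at `x_{i_r}` and the
resulting linear word at `x_{i₁}` produces the same pieces as cutting at `x_{i₁}` first.
-/

section Splits

variable {α : Type} [DecidableEq α] {M : Type*} [AddCommMonoid M]

@[simp] lemma splits_nil (j : α) : splits j [] = [] := rfl

lemma splits_cons (j c : α) (v : List α) :
    splits j (c :: v) =
      (if c = j then [([], v)] else []) ++ (splits j v).map fun p => (c :: p.1, p.2) := by
  simp only [splits, List.length_cons, List.range_succ_eq_map, List.filterMap_cons,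
    List.filterMap_map, List.map_filterMap]
  by_cases h : c = j <;> simp [h, Function.comp_def, apply_ite]

lemma splits_append (j : α) (u t : List α) :
    splits j (u ++ t) =
      (splits j u).map (fun p => (p.1, p.2 ++ t)) ++
        (splits j t).map (fun p => (u ++ p.1, p.2)) := by
  induction u with
  | nil => simp
  | cons c u ih => by_cases h : c = j <;> simp [splits_cons, ih, h, Function.comp_def]

/-- Both sides sum `F a b c` over the ways of writing `v = a x b y c`. -/
theorem sum_splits_fst_eq_sum_splits_snd (x y : α) (v : List α)
    (F : List α → List α → List α → M) :
    ((splits y v).map fun p => ((splits x p.1).map fun q => F q.1 q.2 p.2).sum).sum =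
      ((splits x v).map fun p => ((splits y p.2).map fun q => F p.1 q.1 q.2).sum).sum := by
  induction v generalizing F with
  | nil => simp
  | cons c v ih =>
    have h := ih (fun a b d => F (c :: a) b d)
    by_cases hy : c = y <;> by_cases hx : c = x <;>
      simp_all [splits_cons, List.sum_map_add, Function.comp_def]

/-- Both sides sum `f a b` over the ways of writing the cyclic word `w` as `a i b j`. -/
theorem sum_cycSplits_splits_comm (i j : α) (w : List α) (f : List α → List α → M) :
    ((cycSplits j w).map fun v => ((splits i v).map fun q => f q.1 q.2).sum).sum =
      ((cycSplits i w).map fun u => ((splits j u).map fun q => f q.2 q.1).sum).sum := by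
  simp only [cycSplits, List.map_map, Function.comp_def, splits_append, List.map_append,
    List.sum_append, List.sum_map_add]
  rw [sum_splits_fst_eq_sum_splits_snd i j w fun a b d => f (d ++ a) b,
    sum_splits_fst_eq_sum_splits_snd j i w fun a b d => f b (d ++ a), add_comm]

end Splits

section TupleMaps

variable {α : Type}

def consT (a : List α) : Tens α →ₗ[ℂ] Tens α := Finsupp.lmapDomain ℂ ℂ (List.cons a)

def concatT (a : List α) : Tens α →ₗ[ℂ] Tens α := Finsupp.lmapDomain ℂ ℂ (· ++ [a])

@[simp] lemma consT_single (a : List α) (tup : List (List α)) (c : ℂ) :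
    consT a (Finsupp.single tup c) = Finsupp.single (a :: tup) c :=
  Finsupp.mapDomain_single

lemma rotT_single (tup : List (List α)) (c : ℂ) :
    rotT (Finsupp.single tup c) = Finsupp.single (tup.rotate 1) c :=
  Finsupp.mapDomain_single

lemma rotT_consT (a : List α) (X : Tens α) : rotT (consT a X) = concatT a X := by
  simp only [rotT, consT, concatT, Finsupp.lmapDomain_apply, ← Finsupp.mapDomain_comp]
  congr 1
  funext l
  simp [List.rotate_cons_succ]

lemma consT_concatT (a b : List α) (X : Tens α) :
    consT a (concatT b X) = concatT b (consT a X) := by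
  simp only [consT, concatT, Finsupp.lmapDomain_apply, ← Finsupp.mapDomain_comp]
  rfl

end TupleMaps

variable {α : Type} [DecidableEq α]

lemma splitFirst_eq_linearCombination (j : α) :
    splitFirst j = Finsupp.linearCombination ℂ (splitFirstTup j) := by
  funext x
  rw [Finsupp.linearCombination_apply]
  rfl

lemma splitFirst_list_sum (j : α) (l : List (Tens α)) :
    splitFirst j l.sum = (l.map (splitFirst j)).sum := by
  rw [splitFirst_eq_linearCombination, map_list_sum]

lemma splitFirst_consT (i : α) (a : List α) (X : Tens α) :
    splitFirst i (consT a X) = ((splits i a).map fun q => consT q.1 (consT q.2 X)).sum := by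
  rw [splitFirst_eq_linearCombination]
  induction X using Finsupp.induction_linear with
  | zero => simp
  | add x y hx hy => simp only [map_add, hx, hy, List.sum_map_add]
  | single tup c =>
    simp [splitFirstTup, Finsupp.linearCombination_single, List.smul_sum, Finsupp.smul_single,
      Function.comp_def]

/-- `multiSplit [j₁,…,j_m] v` sums the tuples `[t₀,…,t_m]` over all ways of writing
`v = t₀ j₁ t₁ ⋯ j_m t_m`. -/
def multiSplit : List α → List α → Tens α
  | [], v => Finsupp.single [v] 1
  | j :: js, v => ((splits j v).map fun p => consT p.1 (multiSplit js p.2)).sum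

lemma splitFirst_multiSplit (i : α) (js v : List α) :
    splitFirst i (multiSplit js v) = multiSplit (i :: js) v := by
  cases js with
  | nil =>
    simp [multiSplit, splitFirst_eq_linearCombination, Finsupp.linearCombination_single,
      splitFirstTup]
  | cons j js =>
    simp only [multiSplit, splitFirst_list_sum, List.map_map, Function.comp_def, splitFirst_consT,
      map_list_sum]
    exact sum_splits_fst_eq_sum_splits_snd i j v fun a b d => consT a (consT b (multiSplit js d))

lemma multiSplit_append_singleton (js : List α) (j : α) (u : List α) :
    multiSplit (js ++ [j]) u = ((splits j u).map fun q => concatT q.2 (multiSplit js q.1)).sum := by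
  induction js generalizing u with
  | nil => simp [multiSplit, concatT]
  | cons k js ih =>
    simp only [List.cons_append, multiSplit, ih, map_list_sum, List.map_map, Function.comp_def,
      consT_concatT]
    exact (sum_splits_fst_eq_sum_splits_snd k j u fun a b d =>
      concatT d (consT a (multiSplit js b))).symm

lemma rotT_multiSplit_cons (i : α) (js v : List α) :
    rotT (multiSplit (i :: js) v) =
      ((splits i v).map fun p => concatT p.1 (multiSplit js p.2)).sum := by
  simp [multiSplit, map_list_sum, Function.comp_def, rotT_consT]

lemma hdTuple_cons (i : α) {l : List α} (hl : l ≠ []) (w : List α) :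
    hdTuple (i :: l) w = splitFirst i (hdTuple l w) := by
  obtain ⟨k, l, rfl⟩ := List.exists_cons_of_ne_nil hl
  rfl

lemma hdTuple_append_singleton (l : List α) (j : α) (w : List α) :
    hdTuple (l ++ [j]) w = ((cycSplits j w).map (multiSplit l)).sum := by
  induction l with
  | nil => rfl
  | cons i l ih =>
    rw [List.cons_append, hdTuple_cons i (by simp), ih, splitFirst_list_sum, List.map_map]
    simp only [Function.comp_def, splitFirst_multiSplit]

lemma rotT_hdTuple (idx w : List α) : rotT (hdTuple idx w) = hdTuple (idx.rotate 1) w := by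
  rcases idx with _ | ⟨i, rest⟩
  · simp [hdTuple]
  rcases List.eq_nil_or_concat rest with rfl | ⟨js, j, rfl⟩
  · rw [List.rotate_singleton, ← List.nil_append [i], hdTuple_append_singleton, map_list_sum,
      List.map_map]
    simp [Function.comp_def, multiSplit, rotT_single]
  · rw [List.concat_eq_append, List.rotate_cons_succ, List.rotate_zero, ← List.cons_append,
      hdTuple_append_singleton, hdTuple_append_singleton, map_list_sum, List.map_map]
    simp only [Function.comp_def, rotT_multiSplit_cons]
    rw [sum_cycSplits_splits_comm i j w fun a b => concatT a (multiSplit js b)]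
    exact congrArg List.sum <|
      List.map_congr_left fun u _ => (multiSplit_append_singleton js j u).symm

theorem higher_derivative_cyclic_symmetry_general {α : Type} [DecidableEq α]
    (Φ : FA α) (idx : List α) :
    rotT (higherDer idx Φ) = higherDer (idx.rotate 1) Φ := by
  simp only [higherDer, map_finsuppSum, map_smul, rotT_hdTuple]

/-- Cyclic symmetry of higher cyclic derivatives:
`σ (∂ʳΦ/∂x_{i₁}…∂x_{i_r}) = ∂ʳΦ/∂x_{σ(i₁)}…∂x_{σ(i_r)}`. -/
theorem higher_derivative_cyclic_symmetry {α : Type} [DecidableEq α]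
    (Φ : FA α) (idx : List α) (hidx : idx ≠ []) :
    rotT (higherDer idx Φ) = higherDer (idx.rotate 1) Φ :=
  higher_derivative_cyclic_symmetry_general Φ idx
end
end

section
/- Let F = ℂ⟨x₁,…,xₙ⟩ and let Φ ∈ F_cyc. Then the n-tuple of cyclic derivatives satisfies the identity Σ_{i=1}^{n} [x_i, ∂Φ/∂x_i] = 0 in F. (This is the '⇐' direction of the noncommutative Poincaré lemma.) -/
/-!
At position `s` of a word `w`, the term of `∂w/∂x_{w[s]}` is the rotation of `w` starting after
`w[s]`, with `w[s]` removed. Multiplying it by `x_{w[s]}` on the left gives the rotation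
`w.rotate s`, on the right the rotation `w.rotate (s + 1)`. Summed over all letters, the
commutators therefore telescope along `w.rotate 0 = w, …, w.rotate w.length = w` and vanish;
the general case follows by linearity.
-/

open scoped BigOperators

noncomputable section

/-- The generator `x_i` of the free algebra. -/
def gen {α : Type} (i : α) : FA α :=
  MonoidAlgebra.of ℂ (FreeMonoid α) (FreeMonoid.of i)

/-- The monomial of the free algebra corresponding to a word. -/
def wordElt {α : Type} (w : List α) : FA α :=
  MonoidAlgebra.of ℂ (FreeMonoid α) (FreeMonoid.ofList w)

/-- Cyclic derivative of a single cyclic word: delete each occurrence of `j`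
and read the cycle starting right after the deleted letter. -/
def cycDerWord {α : Type} [DecidableEq α] (j : α) (w : List α) : FA α :=
  ((splits j w).map fun p => wordElt (p.2 ++ p.1)).sum

/-- The cyclic derivative `∂/∂x_j : F_cyc → F` (computed on a representative in `F`;
it is invariant under cyclic rotation of words, hence well defined on `F_cyc`). -/
def cycDer {α : Type} [DecidableEq α] (j : α) (Φ : FA α) : FA α :=
  Finsupp.sum Φ.coeff fun w c => c • cycDerWord j (FreeMonoid.toList w)

lemma List.sum_filterMap_ite {β M : Type*} [AddMonoid M] (l : List β) (p : β → Prop)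
    [DecidablePred p] (f : β → M) :
    (l.filterMap fun b => if p b then some (f b) else none).sum
      = (l.map fun b => if p b then f b else 0).sum := by
  induction l with
  | nil => rfl
  | cons b l ih => by_cases h : p b <;> simp [h, ih]

section CyclicDerivative

variable {α : Type}

lemma wordElt_append (u v : List α) : wordElt (u ++ v) = wordElt u * wordElt v := by
  simp only [wordElt, ← map_mul]
  rfl

lemma wordElt_singleton (i : α) : wordElt [i] = gen i := rfl

lemma gen_mul_wordElt_eq_rotate {w : List α} {s : ℕ} (hs : s < w.length) :
    gen w[s] * wordElt (w.drop (s + 1) ++ w.take s) = wordElt (w.rotate s) := by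
  rw [List.rotate_eq_drop_append_take hs.le, List.drop_eq_getElem_cons hs, ← wordElt_singleton,
    ← wordElt_append]
  rfl

lemma wordElt_mul_gen_eq_rotate_succ {w : List α} {s : ℕ} (hs : s < w.length) :
    wordElt (w.drop (s + 1) ++ w.take s) * gen w[s] = wordElt (w.rotate (s + 1)) := by
  rw [List.rotate_eq_drop_append_take hs, List.take_succ_eq_append_getElem hs,
    ← wordElt_singleton, ← wordElt_append, List.append_assoc]

variable [DecidableEq α]

lemma cycDerWord_eq_sum_range (j : α) (w : List α) :
    cycDerWord j w = ∑ s ∈ Finset.range w.length,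
      if w[s]? = some j then wordElt (w.drop (s + 1) ++ w.take s) else 0 := by
  simp only [cycDerWord, splits, List.map_filterMap, apply_ite (Option.map _), Option.map_some,
    Option.map_none, List.sum_filterMap_ite]
  rfl

lemma sum_gen_mul_cycDerWord_sub [Fintype α] (w : List α) :
    ∑ i : α, (gen i * cycDerWord i w - cycDerWord i w * gen i) = 0 :=
  calc ∑ i : α, (gen i * cycDerWord i w - cycDerWord i w * gen i)
      = ∑ s ∈ Finset.range w.length, ∑ i : α, if w[s]? = some i then
          gen i * wordElt (w.drop (s + 1) ++ w.take s)
            - wordElt (w.drop (s + 1) ++ w.take s) * gen i else 0 := by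
        simp only [cycDerWord_eq_sum_range, Finset.mul_sum, Finset.sum_mul,
          ← Finset.sum_sub_distrib, mul_ite, ite_mul, mul_zero, zero_mul, ite_sub_ite, sub_self]
        exact Finset.sum_comm
    _ = ∑ s ∈ Finset.range w.length, (wordElt (w.rotate s) - wordElt (w.rotate (s + 1))) := by
        refine Finset.sum_congr rfl fun s hs => ?_
        have hs : s < w.length := Finset.mem_range.mp hs
        simp only [List.getElem?_eq_getElem hs, Option.some_inj, Finset.sum_ite_eq,
          Finset.mem_univ, if_true, gen_mul_wordElt_eq_rotate, wordElt_mul_gen_eq_rotate_succ]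
    _ = 0 := by rw [Finset.sum_range_sub', List.rotate_zero, List.rotate_length, sub_self]

lemma gen_mul_cycDer_sub (i : α) (Φ : FA α) :
    gen i * cycDer i Φ - cycDer i Φ * gen i = Φ.coeff.sum fun w c =>
      c • (gen i * cycDerWord i w.toList - cycDerWord i w.toList * gen i) := by
  simp only [cycDer, Finsupp.sum, Finset.mul_sum, Finset.sum_mul, ← Finset.sum_sub_distrib,
    mul_smul_comm, smul_mul_assoc, smul_sub]

end CyclicDerivative

theorem sum_commutators_of_cyclic_derivatives_eq_zero (n : ℕ) (Φ : FA (Fin n)) :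
    ∑ i : Fin n, (gen i * cycDer i Φ - cycDer i Φ * gen i) = 0 := by
  simp only [gen_mul_cycDer_sub, Finsupp.sum]
  rw [Finset.sum_comm]
  refine Finset.sum_eq_zero fun w _ => ?_
  rw [← Finset.smul_sum, sum_gen_mul_cycDerWord_sub, smul_zero]
end
end

section
/- Let F = ℂ⟨x₁,…,xₙ⟩ and suppose f₁,…,fₙ ∈ F satisfy Σ_{i=1}^{n} [x_i, f_i] = 0. Then there exists a potential Φ ∈ F_cyc such that f_i = ∂Φ/∂x_i for all i = 1,…,n. -/
open scoped BigOperators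

noncomputable section

/-!
Put `G = ∑ᵢ xᵢ fᵢ`. The hypothesis says that `G` is fixed by the rotation moving the first
letter of every word to the end. The cyclic derivative `∂/∂x_j` of a word of length `d` is the
sum over its `d` rotations of "delete a leading `x_j`". On a rotation-invariant element all
rotations contribute equally, so `Φ = ∑_w G_w w / |w|` satisfies
`∂Φ/∂x_j = (delete a leading x_j)(G) = f_j`.
-/

theorem List.sum_map_filterMap {β γ M : Type*} [AddMonoid M] (g : β → Option γ) (h : γ → M)
    (l : List β) : ((l.filterMap g).map h).sum = (l.map fun b => ((g b).map h).getD 0).sum := by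
  induction l with
  | nil => rfl
  | cons b l ih => cases hb : g b <;> simp [hb, ih]

theorem List.sum_map_range {M : Type*} [AddCommMonoid M] (f : ℕ → M) (n : ℕ) :
    ((List.range n).map f).sum = ∑ s ∈ Finset.range n, f s :=
  rfl

theorem Finset.sum_range_div_smul_shift {K M : Type*} [Field K] [CharZero K] [AddCommGroup M]
    [Module K M] (c : ℕ → M) {L : ℕ} (hL : L ≠ 0) (hc : c L = c 0) :
    (L : K)⁻¹ • ∑ s ∈ range L, c s + ∑ s ∈ range L, ((s : K) / L) • c (s + 1)
      = c 0 + ∑ s ∈ range L, ((s : K) / L) • c s := by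
  have shift (g : ℕ → M) : ∑ s ∈ range L, g (s + 1) + g 0 = ∑ s ∈ range L, g s + g L := by
    rw [← sum_range_succ, ← sum_range_succ']
  have hc_sum : ∑ s ∈ range L, c (s + 1) = ∑ s ∈ range L, c s := by simpa [hc] using shift c
  have hweighted := shift fun s => ((s : K) / L) • c s
  have hsplit : ∑ s ∈ range L, (((s + 1 : ℕ) : K) / L) • c (s + 1)
      = ∑ s ∈ range L, ((s : K) / L) • c (s + 1) + (L : K)⁻¹ • ∑ s ∈ range L, c (s + 1) := by
    rw [smul_sum, ← sum_add_distrib]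
    refine sum_congr rfl fun s _ => ?_
    push_cast
    module
  have hL' : (L : K) ≠ 0 := Nat.cast_ne_zero.mpr hL
  simp only [Nat.cast_zero, zero_div, zero_smul, add_zero, div_self hL', one_smul, hc,
    hsplit, hc_sum] at hweighted
  rw [add_comm, hweighted, add_comm]

namespace FA

variable {α : Type}

def wordBasis : Module.Basis (List α) ℂ (FA α) :=
  (MonoidAlgebra.basis (FreeMonoid α) ℂ).reindex FreeMonoid.toList

@[simp] lemma wordBasis_apply (u : List α) : wordBasis u = wordElt u := by
  simp [wordBasis, wordElt, MonoidAlgebra.of_apply]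

@[simp] lemma constr_wordElt (φ : List α → FA α) (u : List α) :
    wordBasis.constr ℂ φ (wordElt u) = φ u := by
  rw [← wordBasis_apply, Module.Basis.constr_basis]

lemma gen_mul_wordElt (i : α) (u : List α) : gen i * wordElt u = wordElt (i :: u) := by
  simp only [gen, wordElt, ← map_mul]
  rfl

lemma wordElt_mul_gen (i : α) (u : List α) : wordElt u * gen i = wordElt (u ++ [i]) := by
  simp only [gen, wordElt, ← map_mul]
  rfl

def rotateLeft : FA α →ₗ[ℂ] FA α := wordBasis.constr ℂ fun u => wordElt (u.rotate 1)

lemma rotateLeft_gen_mul (i : α) (x : FA α) : rotateLeft (gen i * x) = x * gen i := by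
  have key : rotateLeft ∘ₗ LinearMap.mulLeft ℂ (gen i) = LinearMap.mulRight ℂ (gen i) :=
    wordBasis.ext fun u => by simp [rotateLeft, gen_mul_wordElt, wordElt_mul_gen]
  exact LinearMap.congr_fun key x

def invLengthSmul : FA α →ₗ[ℂ] FA α :=
  wordBasis.constr ℂ fun u => (u.length : ℂ)⁻¹ • wordElt u

variable [DecidableEq α]

lemma cycDer_eq_constr (j : α) (x : FA α) :
    cycDer j x = wordBasis.constr ℂ (cycDerWord j) x := by
  simp only [cycDer, Module.Basis.constr_apply, wordBasis, Module.Basis.repr_reindex]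
  rw [Finsupp.sum_mapDomain_index (by simp) (fun _ _ _ => add_smul _ _ _)]
  rfl

def dropHeadWord (j : α) : List α → FA α
  | [] => 0
  | a :: u => if a = j then wordElt u else 0

def dropHead (j : α) : FA α →ₗ[ℂ] FA α := wordBasis.constr ℂ (dropHeadWord j)

lemma dropHead_gen_mul (i j : α) (x : FA α) :
    dropHead j (gen i * x) = if i = j then x else 0 := by
  have key : dropHead j ∘ₗ LinearMap.mulLeft ℂ (gen i) = if i = j then LinearMap.id else 0 :=
    wordBasis.ext fun u => by split_ifs <;> simp [dropHead, dropHeadWord, gen_mul_wordElt, *]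
  have hx := LinearMap.congr_fun key x
  split_ifs at hx ⊢ <;> exact hx

lemma cycDerWord_eq_sum_dropHeadWord_rotate (j : α) (u : List α) :
    cycDerWord j u = ∑ s ∈ Finset.range u.length, dropHeadWord j (u.rotate s) := by
  rw [cycDerWord, splits, List.sum_map_filterMap, List.sum_map_range]
  refine Finset.sum_congr rfl fun s hs => ?_
  have hs : s < u.length := Finset.mem_range.mp hs
  rw [List.rotate_eq_drop_append_take hs.le, List.drop_eq_getElem_cons hs,
    List.cons_append, List.getElem?_eq_getElem hs]
  by_cases hj : u[s] = j <;> simp [dropHeadWord, hj]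

/-- Chosen so that `cycCorrectionWord j (u.rotate 1) - cycCorrectionWord j u` makes up the
difference between `dropHeadWord j u` and the average of `dropHeadWord j` over the rotations
of `u`; this turns "all rotations contribute equally" into an identity of linear maps. -/
def cycCorrectionWord (j : α) (u : List α) : FA α :=
  ∑ s ∈ Finset.range u.length, ((s : ℂ) / u.length) • dropHeadWord j (u.rotate s)

def cycCorrection (j : α) : FA α →ₗ[ℂ] FA α := wordBasis.constr ℂ (cycCorrectionWord j)

lemma invLength_smul_cycDerWord_add_cycCorrectionWord_rotate (j : α) (u : List α) :
    (u.length : ℂ)⁻¹ • cycDerWord j u + cycCorrectionWord j (u.rotate 1)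
      = dropHeadWord j u + cycCorrectionWord j u := by
  by_cases hu : u = []
  · subst hu
    simp [cycDerWord, splits, cycCorrectionWord, dropHeadWord]
  have hrot : cycCorrectionWord j (u.rotate 1) = ∑ s ∈ Finset.range u.length,
      ((s : ℂ) / u.length) • dropHeadWord j (u.rotate (s + 1)) := by
    simp only [cycCorrectionWord, List.length_rotate, List.rotate_rotate, Nat.add_comm 1]
  rw [hrot, cycDerWord_eq_sum_dropHeadWord_rotate, cycCorrectionWord]
  simpa using Finset.sum_range_div_smul_shift (K := ℂ) (fun s => dropHeadWord j (u.rotate s))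
    (List.length_pos_iff.mpr hu).ne' (by simp)

lemma cycDer_invLengthSmul_add_cycCorrection_rotateLeft (j : α) (x : FA α) :
    cycDer j (invLengthSmul x) + cycCorrection j (rotateLeft x)
      = dropHead j x + cycCorrection j x := by
  have key : wordBasis.constr ℂ (cycDerWord j) ∘ₗ invLengthSmul + cycCorrection j ∘ₗ rotateLeft
      = dropHead j + cycCorrection j :=
    wordBasis.ext fun u => by
      simpa [invLengthSmul, rotateLeft, cycCorrection, dropHead] using
        invLength_smul_cycDerWord_add_cycCorrectionWord_rotate j u
  simpa [cycDer_eq_constr] using LinearMap.congr_fun key x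

lemma cycDer_invLengthSmul_of_rotateLeft_eq (j : α) {x : FA α} (hx : rotateLeft x = x) :
    cycDer j (invLengthSmul x) = dropHead j x := by
  simpa [hx] using cycDer_invLengthSmul_add_cycCorrection_rotateLeft j x

end FA

open FA

theorem noncommutative_poincare_lemma (n : ℕ) (f : Fin n → FA (Fin n))
    (hf : ∑ i : Fin n, (gen i * f i - f i * gen i) = 0) :
    ∃ Φ : FA (Fin n), ∀ i : Fin n, f i = cycDer i Φ := by
  set G := ∑ i, gen i * f i
  have hG : rotateLeft G = G := by
    simp only [G, map_sum, rotateLeft_gen_mul]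
    rw [eq_comm, ← sub_eq_zero, ← Finset.sum_sub_distrib, hf]
  refine ⟨invLengthSmul G, fun j => ?_⟩
  rw [cycDer_invLengthSmul_of_rotateLeft_eq j hG]
  simp [G, dropHead_gen_mul]
end
end

section
/- Let Q be the quiver with two vertices and two arrows x₁, x₂ from vertex 1 to vertex 2, and let Q̄ be its double, with reverse arrows x₁*, x₂*. Let Φ = x₁x₁*x₂x₂* − x₁*x₁x₂*x₂ ∈ (ℂQ̄)_cyc. Then the center of the conifold algebra A = 𝔄(ℂQ̄, Φ) is generated by four elements satisfying a single quadratic relation, so that Spec Z(A) is a quadric cone in ℂ⁴. -/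
open scoped BigOperators

noncomputable section

/-- The relation `s ∼ 0` for `s ∈ S`; `RingQuot (idealRel S)` is the quotient of the
free algebra by the two-sided ideal generated by `S`. -/
def idealRel {α : Type} (S : Set (FA α)) : FA α → FA α → Prop :=
  fun a b => a ∈ S ∧ b = 0


/-!
STATEMENT 15 (conifold algebra). `Q` has two vertices and two arrows `x₁, x₂ : 1 → 2`; `Q̄`
has in addition the reversed arrows `x₁*, x₂* : 2 → 1`; and
`Φ = x₁x₁*x₂x₂* − x₁*x₁x₂*x₂`.  The center of the conifold algebra `A = 𝔄(ℂQ̄, Φ)` is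
generated by four elements subject to one (homogeneous) quadratic relation, so `Spec Z(A)`
is a quadric cone in `ℂ⁴`.

The path algebra `ℂQ̄` is presented on generators `e₁ = gen 0`, `e₂ = gen 1` (vertex
idempotents), `x₁ = gen 2`, `x₂ = gen 3`, `x₁* = gen 4`, `x₂* = gen 5`, subject to the
standard relations `e₁ + e₂ = 1`, `eᵢeⱼ = δᵢⱼeᵢ`, `a = e_{t(a)}·a·e_{s(a)}`, together with
the relations `∂Φ/∂a = 0` for all arrows `a` of `Q̄`.
-/

/-- The conifold potential `Φ = x₁x₁*x₂x₂* − x₁*x₁x₂*x₂`. -/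
def conifoldPotential : FA (Fin 6) :=
  wordElt [2, 4, 3, 5] - wordElt [4, 2, 5, 3]

/-- Presentation of the conifold algebra `𝔄(ℂQ̄, Φ)`. -/
def conifoldRels : Set (FA (Fin 6)) :=
  {gen 0 + gen 1 - 1,
   gen 0 * gen 0 - gen 0, gen 1 * gen 1 - gen 1,
   gen 0 * gen 1, gen 1 * gen 0,
   gen 2 - gen 1 * gen 2 * gen 0, gen 3 - gen 1 * gen 3 * gen 0,
   gen 4 - gen 0 * gen 4 * gen 1, gen 5 - gen 0 * gen 5 * gen 1,
   cycDer (2 : Fin 6) conifoldPotential, cycDer (3 : Fin 6) conifoldPotential,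
   cycDer (4 : Fin 6) conifoldPotential, cycDer (5 : Fin 6) conifoldPotential}

/-- The conifold algebra `A = 𝔄(ℂQ̄, Φ)`. -/
abbrev ConifoldAlgebra : Type := RingQuot (idealRel conifoldRels)


/-!
Write `e₁, e₂` for the vertex idempotents, `x i` for the arrows `1 → 2` and `y j = x_j*`. The
relations `∂Φ/∂a = 0` are `y j * x k * y j' = y j' * x k * y j` and
`x i * y k * x i' = x i' * y k * x i`, hence the elements `c i j = y j * x i + x i * y j` are
central and `c 0 0 * c 1 1 = c 0 1 * c 1 0`. This defines `toCenter : ℂ[X₀, X₁, X₂, X₃] → Z(A)`,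
`X_{2i+j} ↦ c i j`.

Every element of `A` is a linear combination of products `g * toCenter p` with `g` a vertex or an
arrow. A central `t` has `e₁ * t * e₂ = e₂ * t * e₁ = 0`, so
`t = e₁ * toCenter p₁ + e₂ * toCenter p₂`, and `x 0 * t = t * x 0` gives
`x 0 * toCenter (p₁ - p₂) = 0`.

In the representation `A → M₂(ℂ[X₀, X₁, X₂, X₃])`, `x i ↦ X_i E₂₁`, `y j ↦ X_{2+j} E₁₂`, the
element `c i j` acts as the scalar `X_i X_{2+j}`. So `x 0 * toCenter p = 0` already forces `p`
into the kernel of the Segre map `X_{2i+j} ↦ X_i X_{2+j}`, which is `(X₀X₃ - X₁X₂)`: it is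
spanned by differences of monomials with equal images, and two such monomials differ by trading a
power of `X₀X₃` for the same power of `X₁X₂`.
-/

namespace MvPolynomial

variable {R : Type*} [CommRing R]

theorem sub_mapDomain_mem {σ : Type*} {I : Ideal (MvPolynomial σ R)} {h : (σ →₀ ℕ) → (σ →₀ ℕ)}
    (hI : ∀ d, monomial d 1 - monomial (h d) 1 ∈ I) (p : MvPolynomial σ R) :
    p - AddMonoidAlgebra.mapDomain h p ∈ I := by
  induction p using MvPolynomial.induction_on' with
  | monomial d r =>
    rw [← single_eq_monomial, AddMonoidAlgebra.mapDomain_single, single_eq_monomial,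
      single_eq_monomial]
    simpa only [mul_sub, C_mul_monomial, mul_one] using I.mul_mem_left (C r) (hI d)
  | add p q hp hq =>
    rw [AddMonoidAlgebra.mapDomain_add, add_sub_add_comm]
    exact I.add_mem hp hq

theorem mem_of_mapDomain_eq_zero {σ τ : Type*} {I : Ideal (MvPolynomial σ R)}
    {f : (σ →₀ ℕ) → (τ →₀ ℕ)} (hI : ∀ d d', f d = f d' → monomial d 1 - monomial d' 1 ∈ I)
    {p : MvPolynomial σ R} (hp : AddMonoidAlgebra.mapDomain f p = 0) : p ∈ I := by
  -- send each fibre of `f` to one of its points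
  set g := Function.invFun f
  have hgf : AddMonoidAlgebra.mapDomain (g ∘ f) p = 0 := by
    rw [← AddMonoidAlgebra.mapDomain_zero g, ← hp]
    apply AddMonoidAlgebra.coeff_injective
    simp [Finsupp.mapDomain_comp]
  have hmem := sub_mapDomain_mem (h := g ∘ f) (fun d => hI _ _ (Function.invFun_eq ⟨d, rfl⟩).symm) p
  rwa [hgf, sub_zero] at hmem

def segre : MvPolynomial (Fin 4) R →ₐ[R] MvPolynomial (Fin 4) R :=
  aeval ![X 0 * X 2, X 0 * X 3, X 1 * X 2, X 1 * X 3]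

def segreExp : (Fin 4 →₀ ℕ) →+ (Fin 4 →₀ ℕ) :=
  (Finsupp.linearCombination ℕ ![.single 0 1 + .single 2 1, .single 0 1 + .single 3 1,
    .single 1 1 + .single 2 1, .single 1 1 + .single 3 1]).toAddMonoidHom

theorem segre_eq_mapDomainAlgHom :
    (segre : MvPolynomial (Fin 4) R →ₐ[R] _) = AddMonoidAlgebra.mapDomainAlgHom R R segreExp := by
  refine MvPolynomial.algHom_ext fun k => ?_
  have hX (a b : Fin 4) : (X a * X b : MvPolynomial (Fin 4) R) =
      AddMonoidAlgebra.single (.single a 1 + .single b 1) 1 := by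
    rw [X, X, monomial_mul, mul_one, single_eq_monomial]
  rw [AddMonoidAlgebra.mapDomainAlgHom_apply, segre, aeval_X]
  conv_rhs => rw [X, ← single_eq_monomial, AddMonoidAlgebra.mapDomain_single]
  fin_cases k <;> simp [segreExp, hX]

theorem segreExp_apply (d : Fin 4 →₀ ℕ) (i : Fin 4) :
    segreExp d i = ![d 0 + d 1, d 2 + d 3, d 0 + d 2, d 1 + d 3] i := by
  fin_cases i <;> simp [segreExp, Finsupp.linearCombination_apply, Finsupp.sum_fintype,
    Fin.sum_univ_four]

theorem monomial_add_sub_monomial_add_mem_span (m : Fin 4 →₀ ℕ) (k : ℕ) :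
    monomial (m + k • (.single 0 1 + .single 3 1)) (1 : R) -
        monomial (m + k • (.single 1 1 + .single 2 1)) 1 ∈
      Ideal.span {X 0 * X 3 - X 1 * X 2} := by
  have hmon (a b : Fin 4) : monomial (m + k • (.single a 1 + .single b 1)) (1 : R) =
      monomial m 1 * (X a * X b) ^ k := by
    rw [X, X, monomial_mul, monomial_pow, monomial_mul, mul_one, one_pow, mul_one]
  rw [hmon, hmon, ← mul_sub, Ideal.mem_span_singleton]
  exact (sub_dvd_pow_sub_pow _ _ k).mul_left _

theorem monomial_sub_monomial_mem_span_of_segreExp_eq {d d' : Fin 4 →₀ ℕ}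
    (h : segreExp d = segreExp d') :
    monomial d (1 : R) - monomial d' 1 ∈ Ideal.span {X 0 * X 3 - X 1 * X 2} := by
  wlog h0 : d' 0 ≤ d 0 generalizing d d'
  · simpa only [neg_sub] using neg_mem (this h.symm (by omega))
  have h01 : d 0 + d 1 = d' 0 + d' 1 := by simpa [segreExp_apply] using DFunLike.congr_fun h 0
  have h02 : d 0 + d 2 = d' 0 + d' 2 := by simpa [segreExp_apply] using DFunLike.congr_fun h 2
  have h13 : d 1 + d 3 = d' 1 + d' 3 := by simpa [segreExp_apply] using DFunLike.congr_fun h 3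
  set m : Fin 4 →₀ ℕ := Finsupp.equivFunOnFinite.symm ![d' 0, d 1, d 2, d' 3]
  have hd : d = m + (d 0 - d' 0) • (.single 0 1 + .single 3 1) := by
    ext i; fin_cases i <;> simp [m] <;> omega
  have hd' : d' = m + (d 0 - d' 0) • (.single 1 1 + .single 2 1) := by
    ext i; fin_cases i <;> simp [m] <;> omega
  have key := monomial_add_sub_monomial_add_mem_span (R := R) m (d 0 - d' 0)
  rwa [← hd, ← hd'] at key

theorem ker_segre : RingHom.ker (segre (R := R)) = Ideal.span {X 0 * X 3 - X 1 * X 2} := by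
  refine le_antisymm (fun p hp => ?_) ?_
  · refine mem_of_mapDomain_eq_zero
      (fun d d' h => monomial_sub_monomial_mem_span_of_segreExp_eq h) ?_
    rwa [RingHom.mem_ker, segre_eq_mapDomainAlgHom, AddMonoidAlgebra.mapDomainAlgHom_apply] at hp
  · rw [Ideal.span_le, Set.singleton_subset_iff, SetLike.mem_coe, RingHom.mem_ker]
    simp [segre]
    ring

end MvPolynomial

namespace FA

variable {α : Type}

theorem wordElt_nil : wordElt ([] : List α) = 1 := rfl

theorem wordElt_cons (a : α) (w : List α) : wordElt (a :: w) = gen a * wordElt w := by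
  rw [wordElt, FreeMonoid.ofList_cons, map_mul]
  rfl

theorem cycDer_wordElt_sub_wordElt [DecidableEq α] (j : α) (w w' : List α) :
    cycDer j (wordElt w - wordElt w') = cycDerWord j w - cycDerWord j w' := by
  simp [cycDer, wordElt, MonoidAlgebra.coeff_sub, Finsupp.sum_sub_index, sub_smul]

theorem adjoin_range_gen : Algebra.adjoin ℂ (Set.range (gen : α → FA α)) = ⊤ := by
  refine Algebra.eq_top_iff.2 fun f => ?_
  induction f using MonoidAlgebra.induction_on with
  | of w =>
    induction w using FreeMonoid.inductionOn' with
    | one => exact Subalgebra.one_mem _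
    | of_mul i w ih =>
      rw [map_mul]
      exact Subalgebra.mul_mem _ (Algebra.subset_adjoin ⟨i, rfl⟩) ih
  | add f g hf hg => exact Subalgebra.add_mem _ hf hg
  | smul r f hf => exact Subalgebra.smul_mem _ hf r

end FA

open FA

namespace ConifoldAlgebra

open MvPolynomial

def mk : FA (Fin 6) →ₐ[ℂ] ConifoldAlgebra := RingQuot.mkAlgHom ℂ (idealRel conifoldRels)

theorem mk_eq_zero {r : FA (Fin 6)} (hr : r ∈ conifoldRels) : mk r = 0 := by
  simpa [mk] using RingQuot.mkAlgHom_rel ℂ (show idealRel conifoldRels r 0 from ⟨hr, rfl⟩)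

theorem mk_eq_mk {a b : FA (Fin 6)} (h : a - b ∈ conifoldRels) : mk a = mk b :=
  sub_eq_zero.1 (by rw [← map_sub, mk_eq_zero h])

def e₁ : ConifoldAlgebra := mk (gen 0)
def e₂ : ConifoldAlgebra := mk (gen 1)
def x : Fin 2 → ConifoldAlgebra := ![mk (gen 2), mk (gen 3)]
def y : Fin 2 → ConifoldAlgebra := ![mk (gen 4), mk (gen 5)]

theorem induction_on {P : ConifoldAlgebra → Prop} (a : ConifoldAlgebra) (h₁ : P e₁) (h₂ : P e₂)
    (hx : ∀ i, P (x i)) (hy : ∀ i, P (y i)) (algebraMap : ∀ r : ℂ, P (algebraMap ℂ _ r))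
    (add : ∀ a b, P a → P b → P (a + b)) (mul : ∀ a b, P a → P b → P (a * b)) : P a := by
  have hgen : Algebra.adjoin ℂ (Set.range fun i => mk (gen i)) = ⊤ := by
    rw [Set.range_comp' mk, ← AlgHom.map_adjoin, adjoin_range_gen, Algebra.map_top,
      AlgHom.range_eq_top]
    exact RingQuot.mkAlgHom_surjective ℂ _
  refine Algebra.adjoin_induction (fun _ hg => ?_) algebraMap (fun a b _ _ => add a b)
    (fun a b _ _ => mul a b) (hgen ▸ Algebra.mem_top : a ∈ Algebra.adjoin ℂ _)
  obtain ⟨i, rfl⟩ := hg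
  fin_cases i
  exacts [h₁, h₂, hx 0, hx 1, hy 0, hy 1]

theorem e₁_add_e₂ : e₁ + e₂ = 1 := by
  rw [e₁, e₂, ← map_add, ← map_one mk]
  exact mk_eq_mk (by simp [conifoldRels])

@[simp] theorem e₁_mul_e₁ : e₁ * e₁ = e₁ := by
  rw [e₁, ← map_mul]
  exact mk_eq_mk (by simp [conifoldRels])

@[simp] theorem e₂_mul_e₂ : e₂ * e₂ = e₂ := by
  rw [e₂, ← map_mul]
  exact mk_eq_mk (by simp [conifoldRels])

@[simp] theorem e₁_mul_e₂ : e₁ * e₂ = 0 := by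
  rw [e₁, e₂, ← map_mul]
  exact mk_eq_zero (by simp [conifoldRels])

@[simp] theorem e₂_mul_e₁ : e₂ * e₁ = 0 := by
  rw [e₁, e₂, ← map_mul]
  exact mk_eq_zero (by simp [conifoldRels])

theorem mk_gen_eq_mk_gen_mul_mul {i j k : Fin 6}
    (h : gen j - gen i * gen j * gen k ∈ conifoldRels) :
    mk (gen j) = mk (gen i) * mk (gen j) * mk (gen k) := by
  rw [← map_mul, ← map_mul]
  exact mk_eq_mk h

theorem x_eq (i : Fin 2) : x i = e₂ * x i * e₁ := by
  fin_cases i <;> exact mk_gen_eq_mk_gen_mul_mul (by simp [conifoldRels])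

theorem y_eq (i : Fin 2) : y i = e₁ * y i * e₂ := by
  fin_cases i <;> exact mk_gen_eq_mk_gen_mul_mul (by simp [conifoldRels])

theorem cycDer_two_conifoldPotential :
    cycDer 2 conifoldPotential = wordElt [4, 3, 5] - wordElt [5, 3, 4] := by
  rw [conifoldPotential, cycDer_wordElt_sub_wordElt]
  simp [cycDerWord, splits, List.range_succ]

theorem cycDer_three_conifoldPotential :
    cycDer 3 conifoldPotential = wordElt [5, 2, 4] - wordElt [4, 2, 5] := by
  rw [conifoldPotential, cycDer_wordElt_sub_wordElt]
  simp [cycDerWord, splits, List.range_succ]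

theorem cycDer_four_conifoldPotential :
    cycDer 4 conifoldPotential = wordElt [3, 5, 2] - wordElt [2, 5, 3] := by
  rw [conifoldPotential, cycDer_wordElt_sub_wordElt]
  simp [cycDerWord, splits, List.range_succ]

theorem cycDer_five_conifoldPotential :
    cycDer 5 conifoldPotential = wordElt [2, 4, 3] - wordElt [3, 4, 2] := by
  rw [conifoldPotential, cycDer_wordElt_sub_wordElt]
  simp [cycDerWord, splits, List.range_succ]

theorem mk_wordElt_three (a b c : Fin 6) :
    mk (wordElt [a, b, c]) = mk (gen a) * mk (gen b) * mk (gen c) := by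
  rw [wordElt_cons, wordElt_cons, wordElt_cons, wordElt_nil, mul_one, map_mul, map_mul, mul_assoc]

theorem y_mul_x_mul_y (k : Fin 2) : y 0 * x k * y 1 = y 1 * x k * y 0 := by
  fin_cases k
  · have h := mk_eq_mk (a := wordElt [5, 2, 4]) (b := wordElt [4, 2, 5])
      (by rw [← cycDer_three_conifoldPotential]; simp [conifoldRels])
    rw [mk_wordElt_three, mk_wordElt_three] at h
    exact h.symm
  · have h := mk_eq_mk (a := wordElt [4, 3, 5]) (b := wordElt [5, 3, 4])
      (by rw [← cycDer_two_conifoldPotential]; simp [conifoldRels])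
    rw [mk_wordElt_three, mk_wordElt_three] at h
    exact h

theorem x_mul_y_mul_x (k : Fin 2) : x 0 * y k * x 1 = x 1 * y k * x 0 := by
  fin_cases k
  · have h := mk_eq_mk (a := wordElt [2, 4, 3]) (b := wordElt [3, 4, 2])
      (by rw [← cycDer_five_conifoldPotential]; simp [conifoldRels])
    rw [mk_wordElt_three, mk_wordElt_three] at h
    exact h
  · have h := mk_eq_mk (a := wordElt [3, 5, 2]) (b := wordElt [2, 5, 3])
      (by rw [← cycDer_four_conifoldPotential]; simp [conifoldRels])
    rw [mk_wordElt_three, mk_wordElt_three] at h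
    exact h.symm

@[simp] theorem x_mul_e₁ (i : Fin 2) : x i * e₁ = x i := by
  rw [x_eq i, mul_assoc, e₁_mul_e₁]

@[simp] theorem x_mul_e₂ (i : Fin 2) : x i * e₂ = 0 := by
  rw [x_eq i, mul_assoc, e₁_mul_e₂, mul_zero]

@[simp] theorem e₁_mul_x (i : Fin 2) : e₁ * x i = 0 := by
  rw [x_eq i, ← mul_assoc, ← mul_assoc, e₁_mul_e₂, zero_mul, zero_mul]

@[simp] theorem e₂_mul_x (i : Fin 2) : e₂ * x i = x i := by
  rw [x_eq i, ← mul_assoc, ← mul_assoc, e₂_mul_e₂]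

@[simp] theorem y_mul_e₁ (i : Fin 2) : y i * e₁ = 0 := by
  rw [y_eq i, mul_assoc, e₂_mul_e₁, mul_zero]

@[simp] theorem y_mul_e₂ (i : Fin 2) : y i * e₂ = y i := by
  rw [y_eq i, mul_assoc, e₂_mul_e₂]

@[simp] theorem e₁_mul_y (i : Fin 2) : e₁ * y i = y i := by
  rw [y_eq i, ← mul_assoc, ← mul_assoc, e₁_mul_e₁]

@[simp] theorem e₂_mul_y (i : Fin 2) : e₂ * y i = 0 := by
  rw [y_eq i, ← mul_assoc, ← mul_assoc, e₂_mul_e₁, zero_mul, zero_mul]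

@[simp] theorem x_mul_x (i j : Fin 2) : x i * x j = 0 := by
  rw [← x_mul_e₁ i, mul_assoc, e₁_mul_x, mul_zero]

@[simp] theorem y_mul_y (i j : Fin 2) : y i * y j = 0 := by
  rw [← y_mul_e₂ i, mul_assoc, e₂_mul_y, mul_zero]

theorem y_mul_x_mul_y_comm (j k j' : Fin 2) : y j * x k * y j' = y j' * x k * y j := by
  fin_cases j <;> fin_cases j' <;>
    first | rfl | exact y_mul_x_mul_y k | exact (y_mul_x_mul_y k).symm

theorem x_mul_y_mul_x_comm (i k i' : Fin 2) : x i * y k * x i' = x i' * y k * x i := by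
  fin_cases i <;> fin_cases i' <;>
    first | rfl | exact x_mul_y_mul_x k | exact (x_mul_y_mul_x k).symm

def c (i j : Fin 2) : ConifoldAlgebra := y j * x i + x i * y j

theorem e₁_mul_c (i j : Fin 2) : e₁ * c i j = y j * x i := by simp [c, mul_add, ← mul_assoc]
theorem e₂_mul_c (i j : Fin 2) : e₂ * c i j = x i * y j := by simp [c, mul_add, ← mul_assoc]
theorem c_mul_e₁ (i j : Fin 2) : c i j * e₁ = y j * x i := by simp [c, add_mul, mul_assoc]
theorem c_mul_e₂ (i j : Fin 2) : c i j * e₂ = x i * y j := by simp [c, add_mul, mul_assoc]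

theorem mem_center_of_commute {a : ConifoldAlgebra} (h₁ : Commute a e₁) (h₂ : Commute a e₂)
    (hx : ∀ i, Commute a (x i)) (hy : ∀ i, Commute a (y i)) :
    a ∈ Subalgebra.center ℂ ConifoldAlgebra :=
  Subalgebra.mem_center_iff.2 fun b => (induction_on b h₁ h₂ hx hy
    (fun r => Algebra.commute_algebraMap_right r a) (fun _ _ => Commute.add_right)
    (fun _ _ => Commute.mul_right)).eq.symm

theorem c_mem_center (i j : Fin 2) : c i j ∈ Subalgebra.center ℂ ConifoldAlgebra := by
  refine mem_center_of_commute ((c_mul_e₁ i j).trans (e₁_mul_c i j).symm)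
    ((c_mul_e₂ i j).trans (e₂_mul_c i j).symm) (fun l => ?_) (fun l => ?_)
  · calc c i j * x l = c i j * e₂ * x l := by rw [mul_assoc, e₂_mul_x]
      _ = x l * y j * x i := by rw [c_mul_e₂, x_mul_y_mul_x_comm]
      _ = x l * (e₁ * c i j) := by rw [e₁_mul_c, mul_assoc]
      _ = x l * c i j := by rw [← mul_assoc, x_mul_e₁]
  · calc c i j * y l = c i j * e₁ * y l := by rw [mul_assoc, e₁_mul_y]
      _ = y l * x i * y j := by rw [c_mul_e₁, y_mul_x_mul_y_comm]
      _ = y l * (e₂ * c i j) := by rw [e₂_mul_c, mul_assoc]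
      _ = y l * c i j := by rw [← mul_assoc, y_mul_e₂]

theorem c_mul_c (i j k l : Fin 2) :
    c i j * c k l = y j * x i * (y l * x k) + x i * y j * (x k * y l) := by
  calc c i j * c k l = c i j * (e₁ * e₁ + e₂ * e₂) * c k l := by
        rw [e₁_mul_e₁, e₂_mul_e₂, e₁_add_e₂, mul_one]
    _ = c i j * e₁ * (e₁ * c k l) + c i j * e₂ * (e₂ * c k l) := by noncomm_ring
    _ = _ := by rw [c_mul_e₁, e₁_mul_c, c_mul_e₂, e₂_mul_c]

theorem c_mul_c_eq : c 0 0 * c 1 1 = c 0 1 * c 1 0 := by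
  have h₁ : y 0 * x 0 * (y 1 * x 1) = y 1 * x 0 * (y 0 * x 1) := by
    rw [← mul_assoc, y_mul_x_mul_y_comm, mul_assoc]
  have h₂ : x 0 * y 0 * (x 1 * y 1) = x 0 * y 1 * (x 1 * y 0) := by
    simp only [mul_assoc]
    rw [← mul_assoc (y 0), y_mul_x_mul_y_comm, mul_assoc]
  rw [c_mul_c, c_mul_c, h₁, h₂]

def toCenter : MvPolynomial (Fin 4) ℂ →ₐ[ℂ] Subalgebra.center ℂ ConifoldAlgebra :=
  aeval ![⟨c 0 0, c_mem_center 0 0⟩, ⟨c 0 1, c_mem_center 0 1⟩, ⟨c 1 0, c_mem_center 1 0⟩,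
    ⟨c 1 1, c_mem_center 1 1⟩]

theorem toCenter_quadric : toCenter (X 0 * X 3 - X 1 * X 2) = 0 := by
  ext
  simp [toCenter, c_mul_c_eq]

theorem exists_toCenter_eq_c (i j : Fin 2) : ∃ p, (toCenter p : ConifoldAlgebra) = c i j := by
  fin_cases i <;> fin_cases j
  exacts [⟨X 0, by simp [toCenter]⟩, ⟨X 1, by simp [toCenter]⟩, ⟨X 2, by simp [toCenter]⟩,
    ⟨X 3, by simp [toCenter]⟩]

def generators : Set ConifoldAlgebra := {e₁, e₂} ∪ Set.range x ∪ Set.range y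

def generatorsMulCenter : Set ConifoldAlgebra :=
  {a | ∃ g ∈ generators, ∃ p, a = g * toCenter p}

theorem generator_mul_mem_span {g' g : ConifoldAlgebra} (hg' : g' ∈ generators)
    (hg : g ∈ generators) (p : MvPolynomial (Fin 4) ℂ) :
    g' * (g * toCenter p) ∈ Submodule.span ℂ generatorsMulCenter := by
  have mem {g} (hg : g ∈ generators) (p) :
      g * (toCenter p : ConifoldAlgebra) ∈ Submodule.span ℂ generatorsMulCenter :=
    Submodule.subset_span ⟨g, hg, p, rfl⟩
  have cycle {e} (he : e ∈ generators) (i j) :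
      e * c i j * toCenter p ∈ Submodule.span ℂ generatorsMulCenter := by
    obtain ⟨q, hq⟩ := exists_toCenter_eq_c i j
    rw [← hq, mul_assoc, ← Subalgebra.coe_mul, ← map_mul]
    exact mem he _
  rw [← mul_assoc]
  rcases hg' with ((rfl | rfl) | ⟨l, rfl⟩) | ⟨l, rfl⟩ <;>
    rcases hg with ((rfl | rfl) | ⟨i, rfl⟩) | ⟨i, rfl⟩ <;>
    simp only [e₁_mul_e₁, e₁_mul_e₂, e₂_mul_e₁, e₂_mul_e₂, e₁_mul_x, e₂_mul_x, e₁_mul_y, e₂_mul_y,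
      x_mul_e₁, x_mul_e₂, y_mul_e₁, y_mul_e₂, x_mul_x, y_mul_y, zero_mul, ← e₁_mul_c, ← e₂_mul_c]
  all_goals first
    | exact Submodule.zero_mem _
    | (apply cycle; simp [generators])
    | (apply mem; simp [generators])

theorem mem_span_generatorsMulCenter (a : ConifoldAlgebra) :
    a ∈ Submodule.span ℂ generatorsMulCenter := by
  set V := Submodule.span ℂ generatorsMulCenter
  have hgen {g} (hg : g ∈ generators) {v} (hv : v ∈ V) : g * v ∈ V := by
    induction hv using Submodule.span_induction with
    | mem _ h => obtain ⟨g', hg', p, rfl⟩ := h; exact generator_mul_mem_span hg hg' p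
    | zero => rw [mul_zero]; exact V.zero_mem
    | add _ _ _ _ hu hv => rw [mul_add]; exact V.add_mem hu hv
    | smul r _ _ hv => rw [mul_smul_comm]; exact V.smul_mem r hv
  have hmul (b : ConifoldAlgebra) : ∀ v ∈ V, b * v ∈ V := by
    induction b using induction_on with
    | h₁ | h₂ | hx | hy => exact fun v => hgen (by simp [generators])
    | algebraMap r => exact fun v hv => by rw [← Algebra.smul_def]; exact V.smul_mem r hv
    | add a b ha hb => exact fun v hv => by rw [add_mul]; exact V.add_mem (ha v hv) (hb v hv)
    | mul a b ha hb => exact fun v hv => by rw [mul_assoc]; exact ha _ (hb v hv)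
  have hone : (1 : ConifoldAlgebra) ∈ V := by
    rw [← e₁_add_e₂, ← mul_one e₁, ← mul_one e₂, ← OneMemClass.coe_one (Subalgebra.center ℂ _),
      ← map_one toCenter]
    exact V.add_mem (Submodule.subset_span ⟨e₁, by simp [generators], 1, rfl⟩)
      (Submodule.subset_span ⟨e₂, by simp [generators], 1, rfl⟩)
  simpa using hmul a 1 hone

theorem corner_generator {e g : ConifoldAlgebra} (he : e = e₁ ∨ e = e₂) (hg : g ∈ generators) :
    e * g * e = e ∨ e * g * e = 0 := by
  rcases he with rfl | rfl <;> rcases hg with ((rfl | rfl) | ⟨i, rfl⟩) | ⟨i, rfl⟩ <;>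
    simp

theorem exists_corner_eq {e : ConifoldAlgebra} (he : e = e₁ ∨ e = e₂) (a : ConifoldAlgebra) :
    ∃ p, e * a * e = e * toCenter p := by
  induction mem_span_generatorsMulCenter a using Submodule.span_induction with
  | mem _ h =>
    obtain ⟨g, hg, p, rfl⟩ := h
    have hcomm : e * (g * toCenter p) * e = e * g * e * toCenter p := by
      rw [mul_assoc (e * g), Subalgebra.mem_center_iff.1 (toCenter p).2 e]
      simp only [mul_assoc]
    rcases corner_generator he hg with h | h
    · exact ⟨p, by rw [hcomm, h]⟩
    · exact ⟨0, by rw [hcomm, h]; simp⟩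
  | zero => exact ⟨0, by simp⟩
  | add _ _ _ _ hu hv =>
    obtain ⟨p, hp⟩ := hu
    obtain ⟨q, hq⟩ := hv
    exact ⟨p + q, by rw [mul_add, add_mul, hp, hq, map_add, Subalgebra.coe_add, mul_add]⟩
  | smul r _ _ hv =>
    obtain ⟨p, hp⟩ := hv
    exact ⟨r • p, by rw [mul_smul_comm, smul_mul_assoc, hp, map_smul, Subalgebra.coe_smul,
      mul_smul_comm]⟩

theorem exists_eq_of_mem_center {t : ConifoldAlgebra} (ht : t ∈ Subalgebra.center ℂ _) :
    ∃ p₁ p₂, t = e₁ * toCenter p₁ + e₂ * toCenter p₂ := by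
  obtain ⟨p₁, hp₁⟩ := exists_corner_eq (Or.inl rfl) t
  obtain ⟨p₂, hp₂⟩ := exists_corner_eq (Or.inr rfl) t
  have h₁₂ : e₁ * t * e₂ = 0 := by
    rw [mul_assoc, ← Subalgebra.mem_center_iff.1 ht e₂, ← mul_assoc, e₁_mul_e₂, zero_mul]
  have h₂₁ : e₂ * t * e₁ = 0 := by
    rw [mul_assoc, ← Subalgebra.mem_center_iff.1 ht e₁, ← mul_assoc, e₂_mul_e₁, zero_mul]
  refine ⟨p₁, p₂, ?_⟩
  calc t = (e₁ + e₂) * t * (e₁ + e₂) := by rw [e₁_add_e₂, one_mul, mul_one]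
    _ = e₁ * t * e₁ + e₁ * t * e₂ + (e₂ * t * e₁ + e₂ * t * e₂) := by noncomm_ring
    _ = _ := by rw [hp₁, hp₂, h₁₂, h₂₁, add_zero, zero_add]

def generatorMatrix : Fin 6 → Matrix (Fin 2) (Fin 2) (MvPolynomial (Fin 4) ℂ) :=
  ![Matrix.single 0 0 1, Matrix.single 1 1 1, Matrix.single 1 0 (X 0), Matrix.single 1 0 (X 1),
    Matrix.single 0 1 (X 2), Matrix.single 0 1 (X 3)]

def freeToMatrix : FA (Fin 6) →ₐ[ℂ] Matrix (Fin 2) (Fin 2) (MvPolynomial (Fin 4) ℂ) :=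
  MonoidAlgebra.lift ℂ _ _ (FreeMonoid.lift generatorMatrix)

@[simp] theorem freeToMatrix_gen (i : Fin 6) : freeToMatrix (gen i) = generatorMatrix i := by
  rw [freeToMatrix, gen, MonoidAlgebra.lift_of, FreeMonoid.lift_eval_of]

theorem freeToMatrix_eq_zero {r : FA (Fin 6)} (hr : r ∈ conifoldRels) : freeToMatrix r = 0 := by
  simp only [conifoldRels, Set.mem_insert_iff, Set.mem_singleton_iff] at hr
  rcases hr with rfl | rfl | rfl | rfl | rfl | rfl | rfl | rfl | rfl | rfl | rfl | rfl | rfl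
  all_goals simp [generatorMatrix, cycDer_two_conifoldPotential, cycDer_three_conifoldPotential,
    cycDer_four_conifoldPotential, cycDer_five_conifoldPotential, wordElt_cons, wordElt_nil]
  all_goals rw [sub_eq_zero]
  · rw [← Matrix.sum_single_one, Fin.sum_univ_two]
  all_goals congr 1; ring

def toMatrix : ConifoldAlgebra →ₐ[ℂ] Matrix (Fin 2) (Fin 2) (MvPolynomial (Fin 4) ℂ) :=
  RingQuot.liftAlgHom ℂ ⟨freeToMatrix, by
    rintro _ _ ⟨hr, rfl⟩
    rw [freeToMatrix_eq_zero hr, map_zero]⟩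

theorem toMatrix_mk (f : FA (Fin 6)) : toMatrix (mk f) = freeToMatrix f :=
  RingQuot.liftAlgHom_mkAlgHom_apply ℂ _ _ f

theorem toMatrix_toCenter (p : MvPolynomial (Fin 4) ℂ) :
    toMatrix (toCenter p) = algebraMap _ _ (segre p) := by
  have h : toMatrix.comp ((Subalgebra.center ℂ _).val.comp toCenter) =
      (IsScalarTower.toAlgHom ℂ (MvPolynomial (Fin 4) ℂ) _).comp segre := by
    refine algHom_ext fun k => ?_
    fin_cases k <;> simp [toCenter, segre, c, x, y, toMatrix_mk, generatorMatrix,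
      Matrix.algebraMap_eq_diagonal, ← Matrix.sum_single_eq_diagonal, Fin.sum_univ_two, mul_comm]
  exact DFunLike.congr_fun h p

theorem segre_eq_zero_of_x_mul_eq_zero {p : MvPolynomial (Fin 4) ℂ}
    (h : x 0 * toCenter p = 0) : segre p = 0 := by
  have h' := congrArg toMatrix h
  rw [map_mul, toMatrix_toCenter, map_zero, show x 0 = mk (gen 2) from rfl, toMatrix_mk] at h'
  have h₁₀ := congrFun (congrFun h' 1) 0
  simpa [generatorMatrix, Matrix.algebraMap_eq_diagonal] using h₁₀

theorem toCenter_eq_zero_iff (p : MvPolynomial (Fin 4) ℂ) : toCenter p = 0 ↔ segre p = 0 := by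
  refine ⟨fun h => segre_eq_zero_of_x_mul_eq_zero (by rw [h, ZeroMemClass.coe_zero, mul_zero]),
    fun h => ?_⟩
  have hp : p ∈ Ideal.span {X 0 * X 3 - X 1 * X 2} := by rwa [← ker_segre, RingHom.mem_ker]
  obtain ⟨r, rfl⟩ := Ideal.mem_span_singleton'.1 hp
  rw [map_mul, toCenter_quadric, mul_zero]

theorem ker_toCenter :
    RingHom.ker toCenter.toRingHom = Ideal.span {X 0 * X 3 - X 1 * X 2} := by
  ext p
  rw [← ker_segre, RingHom.mem_ker, RingHom.mem_ker]
  exact toCenter_eq_zero_iff p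

theorem toCenter_surjective : Function.Surjective toCenter := by
  rintro ⟨t, ht⟩
  obtain ⟨p₁, p₂, rfl⟩ := exists_eq_of_mem_center ht
  have hx : x 0 * toCenter (p₁ - p₂) = 0 := by
    have hT (p) : (toCenter p : ConifoldAlgebra) * x 0 = x 0 * toCenter p :=
      (Subalgebra.mem_center_iff.1 (toCenter p).2 (x 0)).symm
    have hcomm := Subalgebra.mem_center_iff.1 ht (x 0)
    rw [mul_add, add_mul, mul_assoc e₁, mul_assoc e₂, hT, hT, ← mul_assoc, ← mul_assoc,
      ← mul_assoc, ← mul_assoc, x_mul_e₁, x_mul_e₂, e₁_mul_x, e₂_mul_x, zero_mul, zero_mul,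
      add_zero, zero_add] at hcomm
    rw [map_sub, Subalgebra.coe_sub, mul_sub, hcomm, sub_self]
  have h := (toCenter_eq_zero_iff _).2 (segre_eq_zero_of_x_mul_eq_zero hx)
  rw [map_sub, sub_eq_zero] at h
  refine ⟨p₁, Subtype.ext ?_⟩
  change (toCenter p₁ : ConifoldAlgebra) = e₁ * toCenter p₁ + e₂ * toCenter p₂
  rw [h, ← add_mul, e₁_add_e₂, one_mul]

end ConifoldAlgebra

open MvPolynomial ConifoldAlgebra in
theorem conifold_center_is_quadric_cone :
    ∃ ψ : MvPolynomial (Fin 4) ℂ →ₐ[ℂ] (Subalgebra.center ℂ ConifoldAlgebra),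
      Function.Surjective ψ ∧
        ∃ q : MvPolynomial (Fin 4) ℂ, q ≠ 0 ∧ q.IsHomogeneous 2 ∧
          RingHom.ker ψ.toRingHom = Ideal.span {q} := by
  refine ⟨toCenter, toCenter_surjective, X 0 * X 3 - X 1 * X 2,
    fun h => by simpa using congrArg (eval ![1, 0, 0, 1]) h, ?_, ker_toCenter⟩
  exact ((isHomogeneous_X ℂ 0).mul (isHomogeneous_X ℂ 3)).sub
    ((isHomogeneous_X ℂ 1).mul (isHomogeneous_X ℂ 2))
end
end

section
/- Let D = ⊕_{r≥0} D_r be a graded associative algebra with a degree −1 super-derivation ξ (ξ² = 0), let ω ∈ (Ω²D)_cyc satisfy L_ξ ω = 0, and suppose w ∈ D satisfies dw = ι_δ ω in Ω¹D, where δ = ad(1⊗1). If additionally ξ(D) ∩ ℂ = 0, then ξ(w) = 0; consequently, the super-derivation ∂ on the free product 𝔇 = D * ℂ[t] defined by ∂(t) = w and ∂|_D = ξ satisfies ∂² = 0. -/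
/-!
Since `L_ξ` commutes with `ι_δ` and kills `ω`, it kills `ι_δ ω = dw`; as `L_ξ ∘ d = d ∘ ξ`, this says
`d(ξ w) = 1 ⊗ ξ w - ξ w ⊗ 1 = 0`. Contracting the first tensor factor against a functional `f` with
`f 1 = 1` gives `ξ w = f (ξ w) • 1`, a scalar, so `ξ w = 0`. Then `∂²` is a derivation vanishing on the
generators `D` (where it is `ξ² = 0`) and `t` (where it is `ξ w = 0`), hence vanishes identically.
-/

open scoped TensorProduct

theorem TensorProduct.exists_eq_smul_of_tmul_eq_tmul {K V : Type*} [Field K] [AddCommGroup V]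
    [Module K V] {v x : V} (hv : v ≠ 0) (h : v ⊗ₜ[K] x = x ⊗ₜ[K] v) : ∃ c : K, x = c • v := by
  obtain ⟨f, hf⟩ := Module.Projective.exists_dual_eq_one K hv
  refine ⟨f x, ?_⟩
  simpa [hf] using congrArg (TensorProduct.lift ((LinearMap.lsmul K V).comp f)) h

theorem LinearMap.eq_zero_of_leibniz_of_adjoin_eq_top {R E : Type*} [CommSemiring R] [Ring E]
    [Algebra R E] {s : Set E} (hs : Algebra.adjoin R s = ⊤) {δ : E →ₗ[R] E}
    (hδ : ∀ u v, δ (u * v) = δ u * v + u * δ v) (h0 : ∀ x ∈ s, δ x = 0) (u : E) : δ u = 0 := by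
  have hδ1 : δ 1 = 0 := by simpa using hδ 1 1
  have hu : u ∈ Algebra.adjoin R s := hs ▸ Algebra.mem_top
  induction hu using Algebra.adjoin_induction with
  | mem x hx => exact h0 x hx
  | algebraMap c => rw [Algebra.algebraMap_eq_smul_one, map_smul, hδ1, smul_zero]
  | add a b _ _ ha hb => rw [map_add, ha, hb, add_zero]
  | mul a b _ _ ha hb => rw [hδ, ha, hb, zero_mul, mul_zero, add_zero]

noncomputable section

theorem xi_of_w_vanishes_and_differential_squares_to_zero
    (D : Type) [Ring D] [Algebra ℂ D] [Nontrivial D]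
    (ξ : D →ₗ[ℂ] D) (hξsq : ∀ x : D, ξ (ξ x) = 0)
    (Ω2cyc : Type) [AddCommGroup Ω2cyc] [Module ℂ Ω2cyc]
    (ιδ : Ω2cyc →ₗ[ℂ] D ⊗[ℂ] D)
    (Lξ1 : D ⊗[ℂ] D →ₗ[ℂ] D ⊗[ℂ] D) (Lξ2 : Ω2cyc →ₗ[ℂ] Ω2cyc)
    (hLd : ∀ x : D, Lξ1 ((1 : D) ⊗ₜ[ℂ] x - x ⊗ₜ[ℂ] (1 : D)) =
        (1 : D) ⊗ₜ[ℂ] (ξ x) - (ξ x) ⊗ₜ[ℂ] (1 : D))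
    (hcomm : ∀ η : Ω2cyc, ιδ (Lξ2 η) = Lξ1 (ιδ η))
    (ω : Ω2cyc) (hLω : Lξ2 ω = 0)
    (w : D) (hdw : (1 : D) ⊗ₜ[ℂ] w - w ⊗ₜ[ℂ] (1 : D) = ιδ ω)
    (hnoC : ∀ x : D, (∃ c : ℂ, ξ x = c • (1 : D)) → ξ x = 0) :
    ξ w = 0 ∧
      ∀ (E : Type) [Ring E] [Algebra ℂ E] (j : D →ₐ[ℂ] E) (t : E) (del : E →ₗ[ℂ] E),
        (∀ x : D, del (j x) = j (ξ x)) → del t = j w →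
        (∀ u v : E, del (del (u * v)) = del (del u) * v + u * del (del v)) →
        Algebra.adjoin ℂ (Set.range (⇑j) ∪ {t}) = ⊤ →
        ∀ u : E, del (del u) = 0 := by
  have hdξw : (1 : D) ⊗ₜ[ℂ] (ξ w) - (ξ w) ⊗ₜ[ℂ] (1 : D) = 0 := by
    rw [← hLd, hdw, ← hcomm, hLω, map_zero]
  obtain ⟨c, hc⟩ :=
    TensorProduct.exists_eq_smul_of_tmul_eq_tmul one_ne_zero (sub_eq_zero.mp hdξw)
  have hξw : ξ w = 0 := hnoC w ⟨c, hc⟩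
  refine ⟨hξw, fun E _ _ j t del hdj hdt hleib hadj ↦ ?_⟩
  refine LinearMap.eq_zero_of_leibniz_of_adjoin_eq_top (δ := del ∘ₗ del) hadj hleib ?_
  rintro _ (⟨x, rfl⟩ | rfl)
  · simp [hdj, hξsq]
  · simp [hdt, hdj, hξw]
end
end
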